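/- Let f(x) = e^{−a x²} with a > 0. Then the ratio (∫_{−1/2}^{1/2} ∫_ℝ f(x) f(x+t) dx dt)/(‖f‖_{L^1} ‖f‖_{L^2}) equals (2π)^{1/4} erf(√(a/8)) / a^{1/4}, and for a = 7.839 this value exceeds 0.79. -/

import Mathlib

/-!
Completing the square gives `∫ f(x) f(x + t) dx = e^{-a t²/2} √(π/(2a))`, and the substitution
`s = √(a/2) t` turns the remaining integral over `[-1/2, 1/2]` into `√(2π/a) erf √(a/8)`; the norms
in the denominator are `√(π/a)` and `(π/(2a))^{1/4}`. For `a = 7.839` the degree-10 Taylor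
polynomial of `e^{-s²}`, less the remainder bound of `Real.exp_bound`, bounds `erf` from below on
`[0, 1]`; this yields the ratio `≥ 0.748 (a/(2π))^{1/4} > 0.79`.
-/

open MeasureTheory

noncomputable def erf (z : ℝ) : ℝ :=
  (2 / Real.sqrt Real.pi) * ∫ s in (0:ℝ)..z, Real.exp (-s ^ 2)

open Real

theorem integral_exp_neg_mul_sq_mul_exp_neg_mul_add_sq (a t : ℝ) :
    ∫ x : ℝ, exp (-a * x ^ 2) * exp (-a * (x + t) ^ 2) =
      exp (-(a / 2) * t ^ 2) * √(π / (2 * a)) := by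
  have complete_square : ∀ x : ℝ, exp (-a * x ^ 2) * exp (-a * (x + t) ^ 2) =
      exp (-(a / 2) * t ^ 2) * exp (-(2 * a) * (x + t / 2) ^ 2) := by
    intro x
    rw [← exp_add, ← exp_add]
    ring_nf
  simp_rw [complete_square]
  rw [integral_const_mul, integral_add_right_eq_self (fun x => exp (-(2 * a) * x ^ 2)),
    integral_gaussian]

theorem integral_abs_exp_neg_mul_sq (a : ℝ) : ∫ x : ℝ, |exp (-a * x ^ 2)| = √(π / a) := by
  simp_rw [abs_of_pos (exp_pos _)]
  exact integral_gaussian a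

theorem integral_exp_neg_mul_sq_sq (a : ℝ) : ∫ x : ℝ, exp (-a * x ^ 2) ^ 2 = √(π / (2 * a)) := by
  have sq_eq : ∀ x : ℝ, exp (-a * x ^ 2) ^ 2 = exp (-(2 * a) * x ^ 2) := fun x => by
    rw [← exp_nat_mul]
    ring_nf
  simp_rw [sq_eq]
  exact integral_gaussian (2 * a)

theorem integral_exp_neg_sq_symm (r : ℝ) : ∫ s in -r..r, exp (-s ^ 2) = √π * erf r := by
  have hint : ∀ u v : ℝ, IntervalIntegrable (fun s => exp (-s ^ 2)) volume u v :=
    fun u v => (by fun_prop : Continuous fun s : ℝ => exp (-s ^ 2)).intervalIntegrable u v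
  have even : ∫ s in -r..0, exp (-s ^ 2) = ∫ s in (0 : ℝ)..r, exp (-s ^ 2) := by
    have h := intervalIntegral.integral_comp_neg (a := 0) (b := r) fun s => exp (-s ^ 2)
    simp only [neg_sq, neg_zero] at h
    exact h.symm
  rw [← intervalIntegral.integral_add_adjacent_intervals (hint _ 0) (hint 0 _), even, erf]
  field_simp
  ring

theorem integral_exp_neg_mul_sq_symm {c : ℝ} (hc : 0 < c) (r : ℝ) :
    ∫ t in -r..r, exp (-c * t ^ 2) = √(π / c) * erf (√c * r) := by
  have hsc : 0 < √c := sqrt_pos.2 hc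
  have rescale : ∀ t : ℝ, exp (-c * t ^ 2) = exp (-(√c * t) ^ 2) := by
    intro t
    rw [mul_pow, sq_sqrt hc.le, neg_mul]
  simp_rw [rescale]
  rw [intervalIntegral.integral_comp_mul_left (fun s => exp (-s ^ 2)) hsc.ne', mul_neg,
    integral_exp_neg_sq_symm, smul_eq_mul, sqrt_div' _ hc.le]
  ring

theorem sqrt_pow_four {x : ℝ} (hx : 0 ≤ x) : √x ^ 4 = x ^ 2 := by
  rw [show 4 = 2 * 2 from rfl, pow_mul, sq_sqrt hx]

theorem rpow_one_fourth_pow_four {x : ℝ} (hx : 0 ≤ x) : (x ^ (1 / 4 : ℝ)) ^ 4 = x := by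
  rw [← rpow_mul_natCast hx]
  norm_num

theorem gaussian_ratio_constant_eq {a : ℝ} (ha : 0 < a) :
    √(π / (a / 2)) * √(π / (2 * a)) / (√(π / a) * √√(π / (2 * a))) =
      (2 * π) ^ (1 / 4 : ℝ) / a ^ (1 / 4 : ℝ) := by
  have hpi := pi_pos
  refine (pow_left_inj₀ (by positivity) (by positivity) four_ne_zero).1 ?_
  rw [div_pow, div_pow, mul_pow, mul_pow, sqrt_pow_four (by positivity),
    sqrt_pow_four (by positivity), sqrt_pow_four (by positivity), sqrt_pow_four (sqrt_nonneg _),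
    sq_sqrt (by positivity), rpow_one_fourth_pow_four (by positivity),
    rpow_one_fourth_pow_four ha.le]
  field_simp

theorem gaussian_autocorrelation_ratio {a : ℝ} (ha : 0 < a) :
    (∫ t in (-(1 / 2) : ℝ)..(1 / 2), ∫ x : ℝ, exp (-a * x ^ 2) * exp (-a * (x + t) ^ 2)) /
        ((∫ x : ℝ, |exp (-a * x ^ 2)|) * √(∫ x : ℝ, exp (-a * x ^ 2) ^ 2)) =
      (2 * π) ^ (1 / 4 : ℝ) * erf √(a / 8) / a ^ (1 / 4 : ℝ) := by
  have half_sqrt : √(a / 2) * (1 / 2) = √(a / 8) := by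
    rw [show a / 8 = a / 2 * (1 / 2) ^ 2 by ring, sqrt_mul (by positivity), sqrt_sq (by norm_num)]
  simp_rw [integral_exp_neg_mul_sq_mul_exp_neg_mul_add_sq]
  rw [intervalIntegral.integral_mul_const, integral_exp_neg_mul_sq_symm (half_pos ha),
    half_sqrt, integral_abs_exp_neg_mul_sq, integral_exp_neg_mul_sq_sq]
  calc _ = √(π / (a / 2)) * √(π / (2 * a)) / (√(π / a) * √√(π / (2 * a))) * erf √(a / 8) := by
        ring
    _ = _ := by
      rw [gaussian_ratio_constant_eq ha]
      ring

theorem taylor_le_exp_neg {u : ℝ} (h0 : 0 ≤ u) (h1 : u ≤ 1) :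
    1 - u + u ^ 2 / 2 - u ^ 3 / 6 + u ^ 4 / 24 - u ^ 5 / 120 - 7 * u ^ 6 / 4320 ≤ exp (-u) := by
  -- `Real.exp_bound` with `n = 6` bounds the remainder by `|x| ^ 6 * (7 / (6! * 6))`.
  have h := exp_bound (x := -u) (by rwa [abs_neg, abs_of_nonneg h0]) (n := 6) (by norm_num)
  rw [abs_neg, abs_of_nonneg h0] at h
  have h' := (abs_le.1 h).1
  norm_num [Finset.sum_range_succ, Nat.factorial] at h'
  linarith

theorem odd_taylor_le_erf {z : ℝ} (h0 : 0 ≤ z) (h1 : z ≤ 1) :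
    2 / √π * (z - z ^ 3 / 3 + z ^ 5 / 10 - z ^ 7 / 42 + z ^ 9 / 216 - z ^ 11 / 1320 -
      7 * z ^ 13 / 56160) ≤ erf z := by
  let p : ℝ → ℝ := fun s =>
    1 - s ^ 2 + (s ^ 2) ^ 2 / 2 - (s ^ 2) ^ 3 / 6 + (s ^ 2) ^ 4 / 24 - (s ^ 2) ^ 5 / 120 -
      7 * (s ^ 2) ^ 6 / 4320
  have antideriv : ∀ s : ℝ, HasDerivAt (fun x : ℝ => x - x ^ 3 / 3 + x ^ 5 / 10 - x ^ 7 / 42 +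
      x ^ 9 / 216 - x ^ 11 / 1320 - 7 * x ^ 13 / 56160) (p s) s := by
    intro s
    refine (((((((hasDerivAt_id' s).sub ((hasDerivAt_pow 3 s).div_const 3)).add
      ((hasDerivAt_pow 5 s).div_const 10)).sub ((hasDerivAt_pow 7 s).div_const 42)).add
      ((hasDerivAt_pow 9 s).div_const 216)).sub ((hasDerivAt_pow 11 s).div_const 1320)).sub
      (((hasDerivAt_pow 13 s).const_mul 7).div_const 56160)).congr_deriv ?_
    norm_num [p]
    ring
  have hp : Continuous p := by fun_prop
  have integral_p : ∫ s in (0 : ℝ)..z, p s = z - z ^ 3 / 3 + z ^ 5 / 10 - z ^ 7 / 42 +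
      z ^ 9 / 216 - z ^ 11 / 1320 - 7 * z ^ 13 / 56160 := by
    rw [intervalIntegral.integral_eq_sub_of_hasDerivAt (fun s _ => antideriv s)
      (hp.intervalIntegrable 0 z)]
    norm_num
  rw [erf, ← integral_p]
  gcongr
  refine intervalIntegral.integral_mono_on h0 (hp.intervalIntegrable 0 z)
    ((by fun_prop : Continuous fun s : ℝ => exp (-s ^ 2)).intervalIntegrable 0 z) fun s hs => ?_
  exact taylor_le_exp_neg (sq_nonneg s) (pow_le_one₀ hs.1 (hs.2.trans h1))

theorem lt_two_mul_pi_rpow_mul_erf_div_rpow_at_7839 :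
    (0.79 : ℝ) < (2 * π) ^ (1 / 4 : ℝ) * erf √(7.839 / 8) / 7.839 ^ (1 / 4 : ℝ) := by
  have hpi := pi_pos
  set z := √(7.839 / 8 : ℝ)
  have hz2 : z ^ 2 = 7.839 / 8 := sq_sqrt (by norm_num)
  have hz0 : 0 ≤ z := sqrt_nonneg _
  have erf_ge : 2 / √π * (0.748 * z) ≤ erf z := by
    refine le_trans ?_ (odd_taylor_le_erf hz0 (by nlinarith))
    gcongr
    have odd : z - z ^ 3 / 3 + z ^ 5 / 10 - z ^ 7 / 42 + z ^ 9 / 216 - z ^ 11 / 1320 -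
        7 * z ^ 13 / 56160 = (1 - z ^ 2 / 3 + (z ^ 2) ^ 2 / 10 - (z ^ 2) ^ 3 / 42 +
          (z ^ 2) ^ 4 / 216 - (z ^ 2) ^ 5 / 1320 - 7 * (z ^ 2) ^ 6 / 56160) * z := by
      ring
    rw [odd, hz2]
    exact mul_le_mul_of_nonneg_right (by norm_num) hz0
  rw [lt_div_iff₀ (by positivity)]
  refine (lt_of_pow_lt_pow_left₀ 4 (by positivity) ?_).trans_le
    (mul_le_mul_of_nonneg_left erf_ge (by positivity))
  rw [mul_pow, mul_pow, mul_pow, mul_pow, div_pow, rpow_one_fourth_pow_four (by norm_num),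
    rpow_one_fourth_pow_four (by positivity), sqrt_pow_four hpi.le, show z ^ 4 = (z ^ 2) ^ 2 by ring,
    hz2, show 2 * π * (2 ^ 4 / π ^ 2 * (0.748 ^ 4 * ((7.839 : ℝ) / 8) ^ 2)) =
      2 ^ 5 * 0.748 ^ 4 * (7.839 / 8) ^ 2 / π by field_simp, lt_div_iff₀ hpi]
  nlinarith [pi_lt_d6]

theorem gaussian_ratio (a : ℝ) (ha : 0 < a) :
    (∫ t in (-(1/2) : ℝ)..(1/2), ∫ x : ℝ,
        Real.exp (-a * x ^ 2) * Real.exp (-a * (x + t) ^ 2)) /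
        ((∫ x : ℝ, |Real.exp (-a * x ^ 2)|) *
          Real.sqrt (∫ x : ℝ, Real.exp (-a * x ^ 2) ^ 2)) =
      (2 * Real.pi) ^ ((1 : ℝ) / 4) * erf (Real.sqrt (a / 8)) / a ^ ((1 : ℝ) / 4) ∧
    (a = 7.839 →
      (0.79 : ℝ) <
        (2 * Real.pi) ^ ((1 : ℝ) / 4) * erf (Real.sqrt (a / 8)) / a ^ ((1 : ℝ) / 4)) := by
  refine ⟨gaussian_autocorrelation_ratio ha, ?_⟩
  rintro rfl
  exact lt_two_mul_pi_rpow_mul_erf_div_rpow_at_7839
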